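/- Assume (H2): ±i are simple eigenvalues of A, i.e. dim 𝒩(i−A_c) = 1 = codim ℛ(i−A_c) and every nonzero ψ ∈ 𝒩(i−A_c) satisfies ψ ∉ ℛ(i−A_c). Then V_c = V⋆ ⊕ V♯, i.e. V_c is the (internal) direct sum of the closed subspaces V⋆ and V♯. -/

import Mathlib

/-!
The eigenvector `X = ι_c ψ⋆` lies outside `ℛ(i - A_c)` by (H2), but inside `ℛ(-i - A_c)`, since
`(-i - A_c) ψ⋆ = -2i X`. Conjugation exchanges the two ranges, so `conj X` lies in `ℛ(i - A_c)` and
not in `ℛ(-i - A_c)`. Both ranges are complex subspaces of complex codimension one, hence are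
complemented by the lines `ℂ X` and `ℂ conj X` respectively. Writing `v = r + c X` with
`r ∈ ℛ(i - A_c)` and then `r = s + d conj X` with `s ∈ ℛ(-i - A_c)` forces `s ∈ V♯`, and the two
complements give uniqueness in the same order. The ranges are closed because a bounded operator
between Banach spaces whose range has a closed algebraic complement has closed range.
-/

open Real Filter Set Function MeasureTheory
open scoped ENNReal

noncomputable section

namespace HopfStmt

/-- The sup part of the periodic Hölder norm. -/
def supN {E : Type*} [NormedAddCommGroup E] (u : ℝ → E) : ℝ := ⨆ t : ℝ, ‖u t‖

/-- The Hölder seminorm part. -/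
def holS {E : Type*} [NormedAddCommGroup E] (β : ℝ) (u : ℝ → E) : ℝ :=
  ⨆ p : ℝ × ℝ, ‖u p.1 - u p.2‖ / |p.1 - p.2| ^ β

/-- The norm of `C^β_{2π}(ℝ, E)`. -/
def holderN {E : Type*} [NormedAddCommGroup E] (β : ℝ) (u : ℝ → E) : ℝ :=
  supN u + holS β u

/-- Membership in `C^β_{2π}(ℝ, E)`: `2π`-periodic and `β`-Hölder continuous. -/
def MemHolder {E : Type*} [NormedAddCommGroup E] (β : ℝ) (u : ℝ → E) : Prop :=
  Function.Periodic u (2 * π) ∧ ∃ C : ℝ, ∀ s t : ℝ, ‖u s - u t‖ ≤ C * |s - t| ^ β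

/-- Membership in the span of the first cosine and sine modes: `w = a ⊗ c₁ + b ⊗ s₁`. -/
def memSp1 {E : Type*} [AddCommGroup E] [Module ℝ E] (w : ℝ → E) : Prop :=
  ∃ a b : E, ∀ t : ℝ, w t = Real.cos t • a + Real.sin t • b

/-- `L₁ ψ := Re (ψ ⊗ e₁)`, i.e. `(L₁ψ)(t) = cos t • ψ₁ - sin t • ψ₂` for `ψ = ψ₁ + iψ₂`. -/
def L1 {E : Type*} [AddCommGroup E] [Module ℝ E] (ψ : E × E) : ℝ → E :=
  fun t => Real.cos t • ψ.1 - Real.sin t • ψ.2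

/-- Multiplication by the complex scalar `c` on the complexification `E_c = E × E`. -/
def csmul {E : Type*} [AddCommGroup E] [Module ℝ E] (c : ℂ) (x : E × E) : E × E :=
  (c.re • x.1 - c.im • x.2, c.im • x.1 + c.re • x.2)

/-- Complex conjugation on the complexification. -/
def conjC {E : Type*} [AddCommGroup E] (x : E × E) : E × E := (x.1, -x.2)

variable {V : Type*} [NormedAddCommGroup V] [NormedSpace ℝ V]
variable {U : Type*} [NormedAddCommGroup U] [NormedSpace ℝ U]

/-- The complexified inclusion `ι_c : U_c → V_c`. -/
def iotaC (ι : U →L[ℝ] V) (ψ : U × U) : V × V := (ι ψ.1, ι ψ.2)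

/-- The complexified operator `A_c : U_c → V_c`. -/
def AcC (A : U →L[ℝ] V) (ψ : U × U) : V × V := (A ψ.1, A ψ.2)

/-- The operator `c - A_c : U_c → V_c` for a complex scalar `c`. -/
def cMinusA (ι A : U →L[ℝ] V) (c : ℂ) (ψ : U × U) : V × V :=
  csmul c (iotaC ι ψ) - AcC A ψ

/-- The kernel `𝒩(i - A_c) ⊆ U_c`. -/
def kerIA (ι A : U →L[ℝ] V) : Set (U × U) := {ψ | cMinusA ι A Complex.I ψ = 0}

/-- The range `ℛ(i - A_c) ⊆ V_c`. -/
def ranIA (ι A : U →L[ℝ] V) : Set (V × V) := Set.range (cMinusA ι A Complex.I)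

/-- `V♯ := ℛ(i - A_c) ∩ ℛ(-i - A_c)`. -/
def Vsharp (ι A : U →L[ℝ] V) : Set (V × V) :=
  Set.range (cMinusA ι A Complex.I) ∩ Set.range (cMinusA ι A (-Complex.I))

/-- The `V`-valued time derivative of `w : ℝ → U` (through the inclusion `ι`). -/
def Xder (ι : U →L[ℝ] V) (w : ℝ → U) : ℝ → V := fun t => deriv (fun s => ι (w s)) t

/-- Membership in `X := C^{1+β}_{2π}(ℝ,V) ∩ C^β_{2π}(ℝ,U)`. -/
def MemX (β : ℝ) (ι : U →L[ℝ] V) (w : ℝ → U) : Prop :=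
  MemHolder β w ∧ (∀ t : ℝ, DifferentiableAt ℝ (fun s => ι (w s)) t) ∧
    MemHolder β (Xder ι w)

/-- The norm of `X`: `‖w‖_X = ‖w‖_{V,1+β} + ‖w‖_{U,β}`. -/
def normX (β : ℝ) (ι : U →L[ℝ] V) (w : ℝ → U) : ℝ :=
  (holderN β (fun t => ι (w t)) + holderN β (Xder ι w)) + holderN β w

/-- `T₁ w := ẇ - A w`. -/
def T1op (ι A : U →L[ℝ] V) (w : ℝ → U) : ℝ → V := fun t => Xder ι w t - A (w t)

/-- Hypothesis (H2): `±i` are simple eigenvalues of `A`, i.e.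
`dim 𝒩(i - A_c) = 1 = codim ℛ(i - A_c)` and nonzero kernel elements do not lie in the range. -/
def H2hyp (ι A : U →L[ℝ] V) : Prop :=
  (∃ ψ ∈ kerIA ι A, ψ ≠ 0 ∧ ∀ φ ∈ kerIA ι A, ∃ c : ℂ, φ = csmul c ψ) ∧
  (∃ χ : V × V, χ ∉ ranIA ι A ∧ ∀ v : V × V, ∃ c : ℂ, ∃ r ∈ ranIA ι A, v = r + csmul c χ) ∧
  (∀ ψ ∈ kerIA ι A, ψ ≠ 0 → iotaC ι ψ ∉ ranIA ι A)

/-- Hypothesis (H4): `ik ∈ ρ(A_c)` for `k ∈ ℤ \ {-1, 1}`. -/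
def H4hyp (ι A : U →L[ℝ] V) : Prop :=
  ∀ k : ℤ, k ≠ 1 → k ≠ -1 → Function.Bijective (cMinusA ι A (Complex.I * (k : ℂ)))

/-- Hypothesis (H5): `‖(in - A_c)⁻¹‖ ≤ M / n` for `n = 2, 3, 4, ...`. -/
def H5hyp (ι A : U →L[ℝ] V) : Prop :=
  ∃ M : ℝ, 0 < M ∧ ∀ n : ℕ, 2 ≤ n →
    ∀ ψ : U × U, (n : ℝ) * ‖iotaC ι ψ‖ ≤ M * ‖cMinusA ι A (Complex.I * (n : ℂ)) ψ‖

/-- Hypothesis (H3): the eigenvalue branch `μ(λ)` of `A_c + (h_u(λ,0))_c` through `μ(0) = i`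
satisfies the transversality condition `Re μ'(0) ≠ 0`. -/
def H3hyp (ι A : U →L[ℝ] V) (h : ℝ → U → V) : Prop :=
  ∃ (ε : ℝ) (μ : ℝ → ℂ) (ψb : ℝ → U × U) (μ' : ℂ), 0 < ε ∧
    μ 0 = Complex.I ∧ ψb 0 ∈ kerIA ι A ∧ ψb 0 ≠ 0 ∧
    ContinuousOn ψb (Metric.ball (0 : ℝ) ε) ∧
    (∀ lam ∈ Metric.ball (0 : ℝ) ε,
      AcC A (ψb lam) + (fderiv ℝ (h lam) 0 (ψb lam).1, fderiv ℝ (h lam) 0 (ψb lam).2)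
        = csmul (μ lam) (iotaC ι (ψb lam))) ∧
    HasDerivAt μ μ' 0 ∧ μ'.re ≠ 0

/-- Unbundled notion: `f : (E, NE) → (F, NF)` is of class `C²` on `D` (Fréchet sense). -/
def UFC2On {E F : Type*} [AddCommGroup E] [Module ℝ E] [AddCommGroup F] [Module ℝ F]
    (NE : E → ℝ) (NF : F → ℝ) (D : Set E) (f : E → F) : Prop :=
  ∃ (D1 : E → E → F) (D2 : E → E → E → F),
    (∀ x ∈ D, IsLinearMap ℝ (D1 x) ∧ ∃ C : ℝ, ∀ e, NF (D1 x e) ≤ C * NE e) ∧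
    (∀ x ∈ D, ∀ ε > (0 : ℝ), ∃ d > (0 : ℝ), ∀ y ∈ D, NE (y - x) < d →
      NF (f y - f x - D1 x (y - x)) ≤ ε * NE (y - x)) ∧
    (∀ x ∈ D, (∀ e, IsLinearMap ℝ (D2 x e)) ∧ (∀ e', IsLinearMap ℝ (fun e => D2 x e e')) ∧
      ∃ C : ℝ, ∀ e e', NF (D2 x e e') ≤ C * NE e * NE e') ∧
    (∀ x ∈ D, ∀ ε > (0 : ℝ), ∃ d > (0 : ℝ), ∀ y ∈ D, NE (y - x) < d →
      ∀ e, NF (D1 y e - D1 x e - D2 x (y - x) e) ≤ ε * NE (y - x) * NE e) ∧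
    (∀ x ∈ D, ∀ ε > (0 : ℝ), ∃ d > (0 : ℝ), ∀ y ∈ D, NE (y - x) < d →
      ∀ e e', NF (D2 y e e' - D2 x e e') ≤ ε * NE e * NE e')

/-- Unbundled notion: `f : ℝ → (E, NE)` is `C¹` on `s` with derivative `f'`. -/
def UC1On {E : Type*} [AddCommGroup E] [Module ℝ E] (NE : E → ℝ) (s : Set ℝ)
    (f f' : ℝ → E) : Prop :=
  (∀ a ∈ s, ∀ ε > (0 : ℝ), ∃ d > (0 : ℝ), ∀ b ∈ s, |b - a| < d →
    NE (f b - f a - (b - a) • f' a) ≤ ε * |b - a|) ∧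
  (∀ a ∈ s, ∀ ε > (0 : ℝ), ∃ d > (0 : ℝ), ∀ b ∈ s, |b - a| < d → NE (f' b - f' a) ≤ ε)

theorem _root_.ContinuousLinearMap.isClosed_range_of_isCompl {𝕜 E F : Type*}
    [NontriviallyNormedField 𝕜] [NormedAddCommGroup E] [NormedSpace 𝕜 E] [CompleteSpace E]
    [NormedAddCommGroup F] [NormedSpace 𝕜 F] [CompleteSpace F]
    (f : E →L[𝕜] F) (G : Submodule 𝕜 F) (h : IsCompl f.range G) (hG : IsClosed (G : Set F)) :
    IsClosed (f.range : Set F) := by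
  have : IsClosed (f.ker : Set E) := f.isClosed_ker
  -- pass to the injective map induced on `E ⧸ ker f`, which has the same range
  have hrange : (f.ker.liftQL f le_rfl).range = f.range := Submodule.range_liftQ _ _ _
  rw [← hrange] at h ⊢
  exact ContinuousLinearMap.closed_complemented_range_of_isCompl_of_ker_eq_bot _ G h hG
    (Submodule.ker_liftQ_eq_bot _ _ _ le_rfl)

section Complexification

variable {E : Type*} [AddCommGroup E]

@[simp] lemma conjC_conjC (x : E × E) : conjC (conjC x) = x := by
  simp [conjC]

lemma conjC_add (x y : E × E) : conjC (x + y) = conjC x + conjC y := by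
  ext <;> simp [conjC, add_comm]

variable [Module ℝ E]

lemma csmul_add (c : ℂ) (x y : E × E) : csmul c (x + y) = csmul c x + csmul c y := by
  ext <;> simp only [csmul, Prod.fst_add, Prod.snd_add, smul_add] <;> abel

lemma add_csmul (c d : ℂ) (x : E × E) : csmul (c + d) x = csmul c x + csmul d x := by
  ext <;> simp only [csmul, Complex.add_re, Complex.add_im, Prod.fst_add, Prod.snd_add, add_smul]
    <;> abel

lemma smul_csmul (a : ℝ) (c : ℂ) (x : E × E) : csmul (a • c) x = a • csmul c x := by
  ext <;> simp only [csmul, Complex.smul_re, Complex.smul_im, Prod.smul_fst, Prod.smul_snd,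
    smul_eq_mul, mul_smul, smul_sub, smul_add]

lemma csmul_csmul (c d : ℂ) (x : E × E) : csmul c (csmul d x) = csmul (c * d) x := by
  ext <;> simp only [csmul, Complex.mul_re, Complex.mul_im] <;> module

@[simp] lemma one_csmul (x : E × E) : csmul 1 x = x := by
  ext <;> simp [csmul]

@[simp] lemma zero_csmul (x : E × E) : csmul 0 x = 0 := by
  ext <;> simp [csmul]

lemma conjC_csmul (c : ℂ) (x : E × E) :
    conjC (csmul c x) = csmul (starRingEnd ℂ c) (conjC x) := by
  ext <;> simp only [conjC, csmul, Complex.conj_re, Complex.conj_im] <;> module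

def csmulL (x : E × E) : ℂ →ₗ[ℝ] E × E where
  toFun c := csmul c x
  map_add' c d := add_csmul c d x
  map_smul' a c := smul_csmul a c x

def lineC (x : E × E) : Submodule ℝ (E × E) := LinearMap.range (csmulL x)

lemma mem_lineC {x y : E × E} : y ∈ lineC x ↔ ∃ c : ℂ, csmul c x = y := LinearMap.mem_range

instance (x : E × E) : FiniteDimensional ℝ (lineC x) := LinearMap.finiteDimensional_range _

def IsCsmulInvariant (R : Submodule ℝ (E × E)) : Prop :=
  ∀ (c : ℂ) (x : E × E), x ∈ R → csmul c x ∈ R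

variable {R : Submodule ℝ (E × E)}

lemma sup_lineC_eq_top_of {χ : E × E} (h : ∀ v : E × E, ∃ c : ℂ, ∃ r ∈ R, v = r + csmul c χ) :
    R ⊔ lineC χ = ⊤ := by
  refine eq_top_iff.2 fun v _ => ?_
  obtain ⟨c, r, hr, rfl⟩ := h v
  exact Submodule.add_mem_sup hr (mem_lineC.2 ⟨c, rfl⟩)

lemma IsCsmulInvariant.eq_zero_of_csmul_mem (hR : IsCsmulInvariant R) {c : ℂ} {x : E × E}
    (hx : x ∉ R) (hcx : csmul c x ∈ R) : c = 0 := by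
  by_contra hc
  apply hx
  simpa [csmul_csmul, inv_mul_cancel₀ hc] using hR c⁻¹ _ hcx

lemma IsCsmulInvariant.disjoint_lineC (hR : IsCsmulInvariant R) {x : E × E} (hx : x ∉ R) :
    Disjoint R (lineC x) := by
  rw [Submodule.disjoint_def]
  rintro _ hy hy'
  obtain ⟨c, rfl⟩ := mem_lineC.1 hy'
  rw [hR.eq_zero_of_csmul_mem hx hy, zero_csmul]

lemma IsCsmulInvariant.sup_lineC_eq_top (hR : IsCsmulInvariant R) {χ x : E × E}
    (hχ : R ⊔ lineC χ = ⊤) (hx : x ∉ R) : R ⊔ lineC x = ⊤ := by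
  obtain ⟨r, hr, _, hχa, hxa⟩ := Submodule.mem_sup.1 (hχ ▸ Submodule.mem_top (x := x))
  obtain ⟨a, rfl⟩ := mem_lineC.1 hχa
  have ha : a ≠ 0 := by rintro rfl; simp_all
  rw [eq_top_iff, ← hχ, sup_le_iff]
  refine ⟨le_sup_left, ?_⟩
  rintro _ hy
  obtain ⟨c, rfl⟩ := mem_lineC.1 hy
  have : csmul c χ = csmul (c * a⁻¹) x + csmul (c * a⁻¹) (-r) := by
    rw [← csmul_add, ← hxa, add_neg_cancel_comm, csmul_csmul, mul_assoc, inv_mul_cancel₀ ha,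
      mul_one]
  rw [this]
  exact add_comm (csmul _ x) _ ▸
    Submodule.add_mem_sup (hR _ _ (R.neg_mem hr)) (mem_lineC.2 ⟨_, rfl⟩)

lemma exists_eq_csmul_add_csmul_add_mem_inf {R₁ R₂ : Submodule ℝ (E × E)} {X Y : E × E}
    (hR₁ : IsCsmulInvariant R₁) (h₁ : R₁ ⊔ lineC X = ⊤) (h₂ : R₂ ⊔ lineC Y = ⊤) (hY : Y ∈ R₁)
    (v : E × E) : ∃ c d : ℂ, ∃ s ∈ R₁ ⊓ R₂, v = csmul c X + csmul d Y + s := by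
  obtain ⟨r, hr, _, hv, rfl⟩ := Submodule.mem_sup.1 (h₁ ▸ Submodule.mem_top (x := v))
  obtain ⟨c, rfl⟩ := mem_lineC.1 hv
  obtain ⟨s, hs, _, hr', rfl⟩ := Submodule.mem_sup.1 (h₂ ▸ Submodule.mem_top (x := r))
  obtain ⟨d, rfl⟩ := mem_lineC.1 hr'
  have hs₁ : s ∈ R₁ := by simpa using R₁.sub_mem hr (hR₁ d Y hY)
  exact ⟨c, d, s, ⟨hs₁, hs⟩, by abel⟩

lemma IsCsmulInvariant.eq_zero_of_csmul_add_csmul_add_eq_zero {R₁ R₂ : Submodule ℝ (E × E)}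
    {X Y : E × E} (hR₁ : IsCsmulInvariant R₁) (hR₂ : IsCsmulInvariant R₂) (hX : X ∉ R₁)
    (hY₁ : Y ∈ R₁) (hY₂ : Y ∉ R₂) {c d : ℂ} {s : E × E} (hs : s ∈ R₁ ⊓ R₂)
    (h : csmul c X + csmul d Y + s = 0) : c = 0 ∧ d = 0 ∧ s = 0 := by
  obtain rfl : c = 0 := hR₁.eq_zero_of_csmul_mem hX <| by
    rw [eq_neg_of_add_eq_zero_left (((add_assoc _ _ _).symm).trans h)]
    exact R₁.neg_mem (R₁.add_mem (hR₁ d Y hY₁) hs.1)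
  rw [zero_csmul, zero_add] at h
  obtain rfl : d = 0 := hR₂.eq_zero_of_csmul_mem hY₂ <| by
    rw [eq_neg_of_add_eq_zero_left h]
    exact R₂.neg_mem hs.2
  simpa using h

end Complexification

lemma isClosed_setOf_csmul_add_csmul {E : Type*} [NormedAddCommGroup E] [NormedSpace ℝ E]
    (X Y : E × E) : IsClosed {x : E × E | ∃ c d : ℂ, x = csmul c X + csmul d Y} := by
  have : {x : E × E | ∃ c d : ℂ, x = csmul c X + csmul d Y} = ↑(lineC X ⊔ lineC Y) := by
    ext x
    simp only [Set.mem_ofPred_eq, SetLike.mem_coe, Submodule.mem_sup, mem_lineC]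
    constructor
    · rintro ⟨c, d, rfl⟩
      exact ⟨_, ⟨c, rfl⟩, _, ⟨d, rfl⟩, rfl⟩
    · rintro ⟨_, ⟨c, rfl⟩, _, ⟨d, rfl⟩, rfl⟩
      exact ⟨c, d, rfl⟩
  rw [this]
  exact Submodule.closed_of_finiteDimensional _

lemma continuous_conjC {E : Type*} [NormedAddCommGroup E] :
    Continuous (conjC : E × E → E × E) :=
  continuous_fst.prodMk continuous_snd.neg

section Operator

def cMinusAL (ι A : U →L[ℝ] V) (c : ℂ) : (U × U) →L[ℝ] (V × V) where
  toFun := cMinusA ι A c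
  map_add' ψ φ := by
    ext <;> simp only [cMinusA, csmul, iotaC, AcC, Prod.fst_add, Prod.snd_add, Prod.fst_sub,
      Prod.snd_sub, map_add, smul_add] <;> abel
  map_smul' a ψ := by
    ext <;> simp only [cMinusA, csmul, iotaC, AcC, Prod.smul_fst, Prod.smul_snd, Prod.fst_sub,
      Prod.snd_sub, map_smul, RingHom.id_apply] <;> module
  cont := by unfold cMinusA csmul iotaC AcC; fun_prop

@[simp] lemma cMinusAL_apply (ι A : U →L[ℝ] V) (c : ℂ) (ψ : U × U) :
    cMinusAL ι A c ψ = cMinusA ι A c ψ := rfl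

variable (ι A : U →L[ℝ] V)

lemma cMinusA_csmul (c d : ℂ) (ψ : U × U) :
    cMinusA ι A c (csmul d ψ) = csmul d (cMinusA ι A c ψ) := by
  ext <;> simp only [cMinusA, csmul, iotaC, AcC, Prod.fst_sub, Prod.snd_sub, map_sub, map_add,
    map_smul] <;> module

lemma cMinusA_sub_cMinusA (c d : ℂ) (ψ : U × U) :
    cMinusA ι A c ψ - cMinusA ι A d ψ = csmul (c - d) (iotaC ι ψ) := by
  ext <;> simp only [cMinusA, csmul, iotaC, AcC, Complex.sub_re, Complex.sub_im, Prod.fst_sub,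
    Prod.snd_sub] <;> module

lemma conjC_cMinusA (c : ℂ) (ψ : U × U) :
    conjC (cMinusA ι A c ψ) = cMinusA ι A (starRingEnd ℂ c) (conjC ψ) := by
  ext <;> simp only [cMinusA, csmul, iotaC, AcC, conjC, Complex.conj_re, Complex.conj_im,
    Prod.fst_sub, Prod.snd_sub, map_neg] <;> module

lemma isCsmulInvariant_range_cMinusAL (c : ℂ) : IsCsmulInvariant (cMinusAL ι A c).range := by
  rintro d _ ⟨ψ, rfl⟩
  exact ⟨csmul d ψ, cMinusA_csmul ι A c d ψ⟩

lemma mem_range_cMinusAL_conj_iff (c : ℂ) (x : V × V) :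
    x ∈ (cMinusAL ι A (starRingEnd ℂ c)).range ↔ conjC x ∈ (cMinusAL ι A c).range := by
  simp only [LinearMap.mem_range, ContinuousLinearMap.coe_coe, cMinusAL_apply]
  constructor
  · rintro ⟨ψ, rfl⟩
    exact ⟨conjC ψ, by rw [conjC_cMinusA, Complex.conj_conj]⟩
  · rintro ⟨ψ, hψ⟩
    exact ⟨conjC ψ, by rw [← conjC_cMinusA, hψ, conjC_conjC]⟩

lemma sup_lineC_conjC_eq_top {c : ℂ} {X : V × V} (h : (cMinusAL ι A c).range ⊔ lineC X = ⊤) :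
    (cMinusAL ι A (starRingEnd ℂ c)).range ⊔ lineC (conjC X) = ⊤ := by
  refine eq_top_iff.2 fun v _ => ?_
  obtain ⟨r, hr, _, hv, hsum⟩ := Submodule.mem_sup.1 (h ▸ Submodule.mem_top (x := conjC v))
  obtain ⟨a, rfl⟩ := mem_lineC.1 hv
  refine Submodule.mem_sup.2 ⟨conjC r, ?_, _, mem_lineC.2 ⟨starRingEnd ℂ a, rfl⟩, ?_⟩
  · rwa [mem_range_cMinusAL_conj_iff, conjC_conjC]
  · rw [← conjC_csmul, ← conjC_add, hsum, conjC_conjC]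

lemma iotaC_mem_range_cMinusAL {c d : ℂ} {ψ : U × U} (hψ : cMinusA ι A c ψ = 0) (hdc : d ≠ c) :
    iotaC ι ψ ∈ (cMinusAL ι A d).range := by
  refine ⟨csmul (d - c)⁻¹ ψ, ?_⟩
  change cMinusA ι A d _ = _
  rw [cMinusA_csmul, ← sub_zero (cMinusA ι A d ψ), ← hψ, cMinusA_sub_cMinusA,
    csmul_csmul, inv_mul_cancel₀ (sub_ne_zero.2 hdc), one_csmul]

end Operator

theorem Vc_directSum_Vstar_Vsharp_general
    {V : Type*} [NormedAddCommGroup V] [NormedSpace ℝ V] [CompleteSpace V]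
    {U : Type*} [NormedAddCommGroup U] [NormedSpace ℝ U] [CompleteSpace U]
    (ι A : U →L[ℝ] V)
    (hH2 : H2hyp ι A)
    (ψs : U × U) (hψs : ψs ∈ kerIA ι A) (hψs0 : ψs ≠ 0) :
    -- `V⋆` and `V♯` are closed subspaces of `V_c`:
    IsClosed {x : V × V | ∃ c d : ℂ,
      x = csmul c (iotaC ι ψs) + csmul d (conjC (iotaC ι ψs))} ∧
    IsClosed (Vsharp ι A) ∧
    -- existence of the decomposition:
    (∀ v : V × V, ∃ c d : ℂ, ∃ s ∈ Vsharp ι A,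
      v = csmul c (iotaC ι ψs) + csmul d (conjC (iotaC ι ψs)) + s) ∧
    -- uniqueness (directness of the sum):
    (∀ c d : ℂ, ∀ s ∈ Vsharp ι A,
      csmul c (iotaC ι ψs) + csmul d (conjC (iotaC ι ψs)) + s = 0 →
        c = 0 ∧ d = 0 ∧ s = 0) := by
  obtain ⟨-, ⟨χ, hχ, hdec⟩, hsimple⟩ := hH2
  set X := iotaC ι ψs
  set R₁ := (cMinusAL ι A Complex.I).range
  set R₂ := (cMinusAL ι A (-Complex.I)).range
  have hR₁ := isCsmulInvariant_range_cMinusAL ι A Complex.I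
  have hR₂ : ∀ x, x ∈ R₂ ↔ conjC x ∈ R₁ := by
    simpa only [Complex.conj_I] using mem_range_cMinusAL_conj_iff ι A Complex.I
  have hX₁ : X ∉ R₁ := hsimple ψs hψs hψs0
  have hY₁ : conjC X ∈ R₁ :=
    (hR₂ X).1 (iotaC_mem_range_cMinusAL ι A hψs (by simp [neg_eq_iff_add_eq_zero]))
  have hY₂ : conjC X ∉ R₂ := by rwa [hR₂, conjC_conjC]
  have hsup₁ : R₁ ⊔ lineC X = ⊤ := hR₁.sup_lineC_eq_top (sup_lineC_eq_top_of hdec) hX₁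
  have hsup₂ : R₂ ⊔ lineC (conjC X) = ⊤ := by
    simpa only [Complex.conj_I] using sup_lineC_conjC_eq_top ι A hsup₁
  have hclosed₁ : IsClosed (R₁ : Set (V × V)) :=
    (cMinusAL ι A Complex.I).isClosed_range_of_isCompl _
      ⟨hR₁.disjoint_lineC hX₁, codisjoint_iff.2 hsup₁⟩ (Submodule.closed_of_finiteDimensional _)
  have hsharp : Vsharp ι A = ↑(R₁ ⊓ R₂) := rfl
  refine ⟨isClosed_setOf_csmul_add_csmul _ _, ?_, ?_, ?_⟩
  · rw [hsharp, Submodule.coe_inf]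
    exact hclosed₁.inter (Set.ext hR₂ ▸ hclosed₁.preimage continuous_conjC)
  · exact exists_eq_csmul_add_csmul_add_mem_inf hR₁ hsup₁ hsup₂ hY₁
  · exact fun c d s hs => hR₁.eq_zero_of_csmul_add_csmul_add_eq_zero
      (isCsmulInvariant_range_cMinusAL ι A _) hX₁ hY₁ hY₂ hs

/-- **Proposition 3.4 (i).** Assume (H2).  Then `V_c = V⋆ ⊕ V♯`, where
`V⋆ = span_ℂ{ψ⋆, conj ψ⋆}` and `V♯ = ℛ(i - A_c) ∩ ℛ(-i - A_c)` are closed subspaces: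
every `v ∈ V_c` decomposes uniquely as `v = c • ψ⋆ + d • conj ψ⋆ + s` with `s ∈ V♯`. -/
theorem Vc_directSum_Vstar_Vsharp
    {V : Type*} [NormedAddCommGroup V] [NormedSpace ℝ V] [CompleteSpace V]
    {U : Type*} [NormedAddCommGroup U] [NormedSpace ℝ U] [CompleteSpace U]
    (ι A : U →L[ℝ] V) (hι : Function.Injective ι)
    (hUnorm : ∀ u : U, ‖u‖ = ‖A u‖) (hAbij : Function.Bijective A)
    (hH2 : H2hyp ι A)
    (ψs : U × U) (hψs : ψs ∈ kerIA ι A) (hψs0 : ψs ≠ 0) :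
    -- `V⋆` and `V♯` are closed subspaces of `V_c`:
    IsClosed {x : V × V | ∃ c d : ℂ,
      x = csmul c (iotaC ι ψs) + csmul d (conjC (iotaC ι ψs))} ∧
    IsClosed (Vsharp ι A) ∧
    -- existence of the decomposition:
    (∀ v : V × V, ∃ c d : ℂ, ∃ s ∈ Vsharp ι A,
      v = csmul c (iotaC ι ψs) + csmul d (conjC (iotaC ι ψs)) + s) ∧
    -- uniqueness (directness of the sum):
    (∀ c d : ℂ, ∀ s ∈ Vsharp ι A,
      csmul c (iotaC ι ψs) + csmul d (conjC (iotaC ι ψs)) + s = 0 →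
        c = 0 ∧ d = 0 ∧ s = 0) :=
  Vc_directSum_Vstar_Vsharp_general ι A hH2 ψs hψs hψs0

end HopfStmt
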